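/- arXiv:1603.04786 — 3 statements merged into one kernel-verified Lean document; each statement's English description precedes it below -/
import Mathlib

section
/- Let k > 0, T > 0, and let q : ℝ × (0,T) → ℝ be bounded and measurable with A ≤ q(x,t) ≤ B for all (x,t). Let g : ℝ → ℝ be bounded, continuous and nonnegative, and let u : ℝ × [0,T] → ℝ be bounded and continuous, twice continuously differentiable in x and once in t on ℝ × (0,T), with u_t = k u_{xx} + q u on ℝ × (0,T) and u(·,0) = g. Let R(x,t) = ∫_ℝ K(x−ξ, t) g(ξ) dξ be the solution of the heat equation R_t = k R_{xx} with R(·,0) = g. Then for all x ∈ ℝ and t ∈ (0,T): e^{A t} R(x,t) ≤ u(x,t) ≤ e^{B t} R(x,t); in particular u ≥ 0. -/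
/-!
The heat extension `R` of `g` solves `R_t = k R_xx`, so `w = e^{Dt} R` solves
`w_t = k w_xx + D w`. As `R ≥ 0`, this `w` is a supersolution of `u_t = k u_xx + q u` when
`q ≤ D` and a subsolution when `D ≤ q`, and both inequalities follow from the comparison
principle for bounded solutions on `ℝ × [0, T)`. That principle is the classical minimum
principle: the factor `e^{-Lt}` makes the zeroth-order coefficient nonpositive, the penalty
`ε (x² + (2k + 1) t + 1)` makes the function coercive and a strict supersolution, and then a
negative minimum on a large rectangle lies off the parabolic boundary, where `v_t ≤ 0 ≤ v_xx`.
-/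

open MeasureTheory Set

/-- The heat kernel with diffusivity `k`. -/
noncomputable def heatKernel (k x t : ℝ) : ℝ :=
  (Real.sqrt (4 * Real.pi * k * t))⁻¹ * Real.exp (-(x ^ 2) / (4 * k * t))

open Real Filter Metric Topology

lemma IsLocalMin.secondDeriv_nonneg {f f' : ℝ → ℝ} {a f'' : ℝ} (hmin : IsLocalMin f a)
    (hf : ∀ x, HasDerivAt f (f' x) x) (hf' : HasDerivAt f' f'' a) : 0 ≤ f'' := by
  by_contra! hneg
  have hderiv : deriv f = f' := funext fun x => (hf x).deriv
  -- by the second-derivative test `a` is also a local maximum, so `f` is locally constant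
  have hmax : IsLocalMax f a := isLocalMax_of_deriv_deriv_neg (by rwa [hderiv, hf'.deriv])
    (by rw [hderiv]; exact hmin.hasDerivAt_eq_zero (hf a)) (hf a).continuousAt
  have hconst : f =ᶠ[𝓝 a] fun _ => f a :=
    (hmin.and hmax).mono fun x hx => le_antisymm hx.2 hx.1
  have hf'_zero : f' =ᶠ[𝓝 a] fun _ => 0 := hconst.eventually_nhds.mono fun x hx => by
    rw [← (hf x).deriv, Filter.EventuallyEq.deriv_eq hx, deriv_const]
  exact hneg.ne ((hf'.congr_of_eventuallyEq hf'_zero.symm).unique (hasDerivAt_const a 0))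

lemma hasDerivAt_nonpos_of_isMinOn_Icc {f : ℝ → ℝ} {a b d : ℝ} (hab : a < b)
    (hmin : IsMinOn f (Icc a b) b) (hf : HasDerivAt f d b) : d ≤ 0 := by
  have hcone : a - b ∈ posTangentConeAt (Icc a b) b :=
    mem_posTangentConeAt_of_segment_subset (by
      rw [add_sub_cancel]; exact (convex_Icc a b).segment_subset (right_mem_Icc.2 hab.le)
        (left_mem_Icc.2 hab.le))
  have h := hmin.localize.hasFDerivWithinAt_nonneg hf.hasFDerivAt.hasFDerivWithinAt hcone
  simp only [ContinuousLinearMap.toSpanSingleton_apply, smul_eq_mul] at h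
  nlinarith

def HasHeatDerivs (s : Set ℝ) (v vx vxx vt : ℝ → ℝ → ℝ) : Prop :=
  ∀ x, ∀ t ∈ s, HasDerivAt (v · t) (vx x t) x ∧ HasDerivAt (vx · t) (vxx x t) x ∧
    HasDerivAt (v x ·) (vt x t) t

namespace HasHeatDerivs

variable {s s' : Set ℝ} {v vx vxx vt w wx wxx wt c : ℝ → ℝ → ℝ} {k T : ℝ}

lemma mono (hv : HasHeatDerivs s v vx vxx vt) (hs : s' ⊆ s) : HasHeatDerivs s' v vx vxx vt :=
  fun x t ht => hv x t (hs ht)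

lemma add (hv : HasHeatDerivs s v vx vxx vt) (hw : HasHeatDerivs s w wx wxx wt) :
    HasHeatDerivs s (fun x t => v x t + w x t) (fun x t => vx x t + wx x t)
      (fun x t => vxx x t + wxx x t) (fun x t => vt x t + wt x t) := fun x t ht =>
  let ⟨hvx, hvxx, hvt⟩ := hv x t ht
  let ⟨hwx, hwxx, hwt⟩ := hw x t ht
  ⟨hvx.add hwx, hvxx.add hwxx, hvt.add hwt⟩

lemma sub (hv : HasHeatDerivs s v vx vxx vt) (hw : HasHeatDerivs s w wx wxx wt) :
    HasHeatDerivs s (fun x t => v x t - w x t) (fun x t => vx x t - wx x t)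
      (fun x t => vxx x t - wxx x t) (fun x t => vt x t - wt x t) := fun x t ht =>
  let ⟨hvx, hvxx, hvt⟩ := hv x t ht
  let ⟨hwx, hwxx, hwt⟩ := hw x t ht
  ⟨hvx.sub hwx, hvxx.sub hwxx, hvt.sub hwt⟩

lemma exp_mul (hv : HasHeatDerivs s v vx vxx vt) (D : ℝ) :
    HasHeatDerivs s (fun x t => exp (D * t) * v x t) (fun x t => exp (D * t) * vx x t)
      (fun x t => exp (D * t) * vxx x t)
      (fun x t => D * (exp (D * t) * v x t) + exp (D * t) * vt x t) := fun x t ht =>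
  let ⟨hvx, hvxx, hvt⟩ := hv x t ht
  ⟨hvx.const_mul _, hvxx.const_mul _,
    (((hasDerivAt_id t).const_mul D).exp.mul hvt).congr_deriv (by simp only [id]; ring)⟩

lemma nonneg_of_coercive (hk : 0 ≤ k) (hv : HasHeatDerivs (Ioc 0 T) v vx vxx vt)
    (hcont : Continuous fun p : ℝ × ℝ => v p.1 p.2)
    (hcoer : ∃ M, ∀ x, ∀ t ∈ Icc 0 T, M ≤ |x| → 0 ≤ v x t) (hinit : ∀ x, 0 ≤ v x 0)
    (hstrict : ∀ x, ∀ t ∈ Ioc 0 T, v x t < 0 → k * vxx x t < vt x t) :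
    ∀ x, ∀ t ∈ Icc 0 T, 0 ≤ v x t := by
  intro x₁ t₁ ht₁
  by_contra! hneg
  obtain ⟨M, hM⟩ := hcoer
  set R := max M (|x₁| + 1)
  set K := Icc (-R) R ×ˢ Icc 0 T
  have hx₁ : (x₁, t₁) ∈ K :=
    ⟨abs_le.1 ((le_add_of_nonneg_right zero_le_one).trans (le_max_right _ _)), ht₁⟩
  obtain ⟨⟨x₀, t₀⟩, ⟨hx₀, ht₀⟩, hmin⟩ :=
    (isCompact_Icc.prod isCompact_Icc).exists_isMinOn ⟨_, hx₁⟩ (hcont.continuousOn (s := K))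
  have hv₀ : v x₀ t₀ < 0 := (hmin hx₁).trans_lt hneg
  have ht₀pos : 0 < t₀ := ht₀.1.lt_of_ne fun h => not_lt.2 (hinit x₀) (h ▸ hv₀)
  have hx₀R : |x₀| < R :=
    lt_of_not_ge fun h => not_lt.2 (hM x₀ t₀ ht₀ ((le_max_left _ _).trans h)) hv₀
  have ht₀' : t₀ ∈ Ioc 0 T := ⟨ht₀pos, ht₀.2⟩
  obtain ⟨-, hvxx, hvt⟩ := hv x₀ t₀ ht₀'
  have hxx : 0 ≤ vxx x₀ t₀ := by
    refine IsLocalMin.secondDeriv_nonneg ?_ (fun x => (hv x t₀ ht₀').1) hvxx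
    filter_upwards [Ioo_mem_nhds (abs_lt.1 hx₀R).1 (abs_lt.1 hx₀R).2] with x hx
    exact hmin (show (x, t₀) ∈ K from ⟨⟨hx.1.le, hx.2.le⟩, ht₀⟩)
  have htt : vt x₀ t₀ ≤ 0 := hasDerivAt_nonpos_of_isMinOn_Icc ht₀pos
    (fun t ht => hmin (show (x₀, t) ∈ K from ⟨hx₀, ht.1, ht.2.trans ht₀.2⟩)) hvt
  exact (hstrict x₀ t₀ ht₀' hv₀).not_ge (htt.trans (mul_nonneg hk hxx))

lemma nonneg_of_supersolution_of_nonpos {C : ℝ} (hk : 0 ≤ k)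
    (hv : HasHeatDerivs (Ioc 0 T) v vx vxx vt) (hcont : Continuous fun p : ℝ × ℝ => v p.1 p.2)
    (hbdd : ∀ x, ∀ t ∈ Icc 0 T, C ≤ v x t) (hc : ∀ x, ∀ t ∈ Ioc 0 T, c x t ≤ 0)
    (hsuper : ∀ x, ∀ t ∈ Ioc 0 T, k * vxx x t + c x t * v x t ≤ vt x t)
    (hinit : ∀ x, 0 ≤ v x 0) :
    ∀ x, ∀ t ∈ Icc 0 T, 0 ≤ v x t := by
  have hpen : ∀ ε > 0, ∀ x, ∀ t ∈ Icc 0 T, 0 ≤ v x t + ε * (x ^ 2 + (2 * k + 1) * t + 1) := by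
    intro ε hε
    have hp : HasHeatDerivs (Ioc 0 T) (fun x t => ε * (x ^ 2 + (2 * k + 1) * t + 1))
        (fun x _ => ε * (2 * x)) (fun _ _ => ε * 2) (fun _ _ => ε * (2 * k + 1)) :=
      fun x t _ => ⟨by simpa using (((hasDerivAt_pow 2 x).add_const _).add_const _).const_mul ε,
        by simpa using ((hasDerivAt_id x).const_mul 2).const_mul ε,
        by simpa using ((((hasDerivAt_id t).const_mul (2 * k + 1)).const_add (x ^ 2)).add_const
          1).const_mul ε⟩
    refine (hv.add hp).nonneg_of_coercive hk (hcont.add (by fun_prop)) ⟨√(|C| / ε),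
      fun x t ht hx => ?_⟩ (fun x => ?_) (fun x t ht hneg => ?_)
    · have hx2 := pow_le_pow_left₀ (sqrt_nonneg _) hx 2
      rw [sq_sqrt (by positivity), sq_abs, div_le_iff₀ hε] at hx2
      have := ht.1
      nlinarith [hbdd x t ht, neg_abs_le C,
        mul_nonneg hε.le (by positivity : 0 ≤ (2 * k + 1) * t)]
    · nlinarith [hinit x, sq_nonneg x]
    · have := ht.1
      have hvneg : v x t < 0 := by
        nlinarith [mul_pos hε (by positivity : 0 < x ^ 2 + (2 * k + 1) * t + 1)]
      nlinarith [hsuper x t ht, mul_nonneg_of_nonpos_of_nonpos (hc x t ht) hvneg.le]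
  intro x t ht
  have hP : 0 < x ^ 2 + (2 * k + 1) * t + 1 := by nlinarith [sq_nonneg x, ht.1]
  refine le_of_forall_pos_le_add fun δ hδ => ?_
  have := hpen (δ / (x ^ 2 + (2 * k + 1) * t + 1)) (by positivity) x t ht
  rwa [div_mul_cancel₀ _ hP.ne'] at this

lemma nonneg_of_supersolution {M : ℝ} (hk : 0 ≤ k) (hv : HasHeatDerivs (Ioo 0 T) v vx vxx vt)
    (hcont : Continuous fun p : ℝ × ℝ => v p.1 p.2) (hbdd : ∃ C, ∀ x, ∀ t ∈ Ico 0 T, C ≤ v x t)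
    (hc : ∀ x, ∀ t ∈ Ioo 0 T, c x t ≤ M)
    (hsuper : ∀ x, ∀ t ∈ Ioo 0 T, k * vxx x t + c x t * v x t ≤ vt x t)
    (hinit : ∀ x, 0 ≤ v x 0) :
    ∀ x, ∀ t ∈ Ico 0 T, 0 ≤ v x t := by
  intro x t ht
  obtain ⟨C, hC⟩ := hbdd
  set L := max M 0
  -- the derivatives exist only for `t < T`, so work on `[0, T']`, where `e^{-L t} v` is a
  -- supersolution with zeroth-order coefficient `c - L ≤ 0`
  obtain ⟨T', htT', hT'T⟩ : ∃ T', t ≤ T' ∧ T' < T :=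
    ⟨(t + T) / 2, by linarith [ht.2], by linarith [ht.2]⟩
  have hIcc : Icc 0 T' ⊆ Ico 0 T := fun s hs => ⟨hs.1, hs.2.trans_lt hT'T⟩
  have hIoc : Ioc 0 T' ⊆ Ioo 0 T := fun s hs => ⟨hs.1, hs.2.trans_lt hT'T⟩
  have hexp : ∀ s ∈ Icc 0 T', exp (-L * s) ≤ 1 := fun s hs =>
    exp_le_one_iff.2 (by nlinarith [le_max_right M 0, hs.1])
  have hw := ((hv.mono hIoc).exp_mul (-L)).nonneg_of_supersolution_of_nonpos (C := -|C|)
    (c := fun x t => c x t - L) hk (by fun_prop) (fun x s hs => ?_) (fun x s hs => ?_)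
    (fun x s hs => ?_) (fun x => by simpa using hinit x) x t ⟨ht.1, htT'⟩
  · exact (mul_nonneg_iff_of_pos_left (exp_pos _)).1 hw
  · calc -|C| ≤ exp (-L * s) * -|C| := by nlinarith [hexp s hs, abs_nonneg C]
      _ ≤ exp (-L * s) * v x s :=
        mul_le_mul_of_nonneg_left ((neg_abs_le C).trans (hC x s (hIcc hs))) (exp_pos _).le
  · linarith [hc x s (hIoc hs), le_max_left M 0]
  · nlinarith [mul_le_mul_of_nonneg_left (hsuper x s (hIoc hs)) (exp_pos (-L * s)).le]

lemma le_of_subsolution_of_supersolution {M : ℝ} (hk : 0 ≤ k)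
    (hv : HasHeatDerivs (Ioo 0 T) v vx vxx vt) (hw : HasHeatDerivs (Ioo 0 T) w wx wxx wt)
    (hv_cont : Continuous fun p : ℝ × ℝ => v p.1 p.2)
    (hw_cont : Continuous fun p : ℝ × ℝ => w p.1 p.2)
    (hv_bdd : ∃ C, ∀ x, ∀ t ∈ Ico 0 T, v x t ≤ C) (hw_bdd : ∃ C, ∀ x, ∀ t ∈ Ico 0 T, C ≤ w x t)
    (hc : ∀ x, ∀ t ∈ Ioo 0 T, c x t ≤ M)
    (hv_sub : ∀ x, ∀ t ∈ Ioo 0 T, vt x t ≤ k * vxx x t + c x t * v x t)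
    (hw_super : ∀ x, ∀ t ∈ Ioo 0 T, k * wxx x t + c x t * w x t ≤ wt x t)
    (hinit : ∀ x, v x 0 ≤ w x 0) :
    ∀ x, ∀ t ∈ Ico 0 T, v x t ≤ w x t := by
  obtain ⟨Cv, hCv⟩ := hv_bdd
  obtain ⟨Cw, hCw⟩ := hw_bdd
  intro x t ht
  refine sub_nonneg.1 ((hw.sub hv).nonneg_of_supersolution hk (hw_cont.sub hv_cont)
    ⟨Cw - Cv, fun x t ht => ?_⟩ hc (fun x t ht => ?_) (fun x => sub_nonneg.2 (hinit x)) x t ht)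
  · linarith [hCv x t ht, hCw x t ht]
  · linarith [hv_sub x t ht, hw_super x t ht]

end HasHeatDerivs

lemma heatKernel_nonneg (k y t : ℝ) : 0 ≤ heatKernel k y t := by
  unfold heatKernel; positivity

lemma heatKernel_eq_mul_exp_neg_mul_sq (k y t : ℝ) :
    heatKernel k y t = (√(4 * π * k * t))⁻¹ * exp (-(1 / (4 * k * t)) * y ^ 2) := by
  unfold heatKernel; ring_nf

lemma integrable_heatKernel {k t : ℝ} (hk : 0 < k) (ht : 0 < t) :
    Integrable (heatKernel k · t) := by
  simp_rw [heatKernel_eq_mul_exp_neg_mul_sq]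
  exact (integrable_exp_neg_mul_sq (by positivity)).const_mul _

lemma integral_heatKernel {k t : ℝ} (hk : 0 < k) (ht : 0 < t) :
    ∫ y, heatKernel k y t = 1 := by
  simp_rw [heatKernel_eq_mul_exp_neg_mul_sq, integral_const_mul, integral_gaussian]
  rw [show π / (1 / (4 * k * t)) = 4 * π * k * t by field_simp]
  exact inv_mul_cancel₀ (by positivity)

lemma sqrt_mul_heatKernel_sqrt_mul {k t : ℝ} (ht : 0 < t) (z : ℝ) :
    √t * heatKernel k (√t * z) t = heatKernel k z 1 := by
  unfold heatKernel
  rw [mul_pow, sq_sqrt ht.le, sqrt_mul' _ ht.le, mul_one]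
  field_simp

lemma hasDerivAt_heatKernel_x (k t y : ℝ) :
    HasDerivAt (heatKernel k · t) (-(y / (2 * k * t)) * heatKernel k y t) y := by
  have h := (((hasDerivAt_pow 2 y).neg.div_const (4 * k * t)).exp).const_mul
    (√(4 * π * k * t))⁻¹
  exact h.congr_deriv (by simp only [Pi.neg_apply]; unfold heatKernel; ring)

lemma hasDerivAt_heatKernel_xx (k t y : ℝ) :
    HasDerivAt (fun y => -(y / (2 * k * t)) * heatKernel k y t)
      (((y / (2 * k * t)) ^ 2 - 1 / (2 * k * t)) * heatKernel k y t) y :=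
  (((hasDerivAt_id y).div_const (2 * k * t)).neg.mul
    (hasDerivAt_heatKernel_x k t y)).congr_deriv (by simp only [Pi.neg_apply, id]; ring)

lemma hasDerivAt_heatKernel_t {k t : ℝ} (hk : 0 < k) (ht : 0 < t) (y : ℝ) :
    HasDerivAt (heatKernel k y ·)
      (k * (((y / (2 * k * t)) ^ 2 - 1 / (2 * k * t)) * heatKernel k y t)) t := by
  have hst : 0 < √t := sqrt_pos.2 ht
  have hK : ∀ s, heatKernel k y s
      = (√(4 * π * k))⁻¹ * ((√s)⁻¹ * exp (-(y ^ 2 / (4 * k)) * s⁻¹)) := fun s => by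
    unfold heatKernel
    rw [sqrt_mul (by positivity), mul_inv]
    ring_nf
  have h := (((hasDerivAt_sqrt ht.ne').inv hst.ne').mul
    ((hasDerivAt_inv ht.ne').const_mul (-(y ^ 2 / (4 * k)))).exp).const_mul (√(4 * π * k))⁻¹
  rw [funext hK]
  refine h.congr_deriv ?_
  simp only [Pi.inv_apply]
  field_simp
  rw [sq_sqrt ht.le]
  ring

lemma continuous_heatKernel (k t : ℝ) : Continuous (heatKernel k · t) := by
  unfold heatKernel; fun_prop

lemma one_add_sq_mul_exp_neg_mul_sq_le {a : ℝ} (ha : 0 < a) (y : ℝ) :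
    (1 + y ^ 2) * exp (-a * y ^ 2) ≤ (1 + 2 / a) * exp (-(a / 2) * y ^ 2) := by
  set E := exp (-(a / 2) * y ^ 2) with hE_def
  have hE : 0 < E := exp_pos _
  have hE1 : E ≤ 1 := exp_le_one_iff.2 (by nlinarith [sq_nonneg y])
  have hpoly : a / 2 * y ^ 2 * E ≤ 1 := by
    have h := (le_add_of_nonneg_right zero_le_one).trans (add_one_le_exp (a / 2 * y ^ 2))
    calc a / 2 * y ^ 2 * E ≤ exp (a / 2 * y ^ 2) * E := mul_le_mul_of_nonneg_right h hE.le
      _ = 1 := by rw [← exp_add]; ring_nf; exact exp_zero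
  have hsq : y ^ 2 * E ≤ 2 / a := by
    rw [le_div_iff₀ ha]; linarith
  calc (1 + y ^ 2) * exp (-a * y ^ 2) = (E + y ^ 2 * E) * E := by
        rw [hE_def, show -a * y ^ 2 = -(a / 2) * y ^ 2 + -(a / 2) * y ^ 2 by ring, exp_add]
        ring
    _ ≤ (1 + 2 / a) * E := by gcongr

lemma exp_neg_mul_add_sq_le {a h : ℝ} (ha : 0 ≤ a) (hh : |h| ≤ 1) (y : ℝ) :
    exp (-a * (y + h) ^ 2) ≤ exp a * exp (-(a / 2) * y ^ 2) := by
  rw [← exp_add, exp_le_exp]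
  have h2 : h ^ 2 ≤ 1 := by nlinarith [sq_abs h, abs_nonneg h]
  nlinarith [mul_nonneg ha (add_nonneg (sq_nonneg (y + 2 * h)) (sub_nonneg.2 h2))]

lemma heatKernel_le_of_mem_Icc {k t₁ t₂ t : ℝ} (hk : 0 < k) (ht₁ : 0 < t₁) (ht : t ∈ Icc t₁ t₂)
    (y : ℝ) : heatKernel k y t ≤ (√(4 * π * k * t₁))⁻¹ * exp (-(1 / (4 * k * t₂)) * y ^ 2) := by
  have ht_pos : 0 < t := ht₁.trans_le ht.1
  rw [heatKernel_eq_mul_exp_neg_mul_sq]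
  gcongr
  · exact ht.1
  · exact ht.2

lemma exists_abs_mul_heatKernel_le {k t₁ t₂ m : ℝ} (hk : 0 < k) (ht₁ : 0 < t₁) (h₁₂ : t₁ ≤ t₂)
    {P : ℝ → ℝ → ℝ} (hP : ∀ t ∈ Icc t₁ t₂, ∀ y, |P y t| ≤ m * (1 + y ^ 2)) :
    ∃ C c, 0 < c ∧ ∀ t ∈ Icc t₁ t₂, ∀ y h, |h| ≤ 1 →
      |P (y + h) t * heatKernel k (y + h) t| ≤ C * exp (-c * y ^ 2) := by
  have ht₂ : 0 < t₂ := ht₁.trans_le h₁₂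
  set a := 1 / (4 * k * t₂)
  have ha : 0 < a := div_pos one_pos (by positivity)
  have hm : 0 ≤ m := by simpa using (abs_nonneg _).trans (hP t₁ ⟨le_rfl, h₁₂⟩ 0)
  have hc : 0 ≤ m * (√(4 * π * k * t₁))⁻¹ := mul_nonneg hm (by positivity)
  refine ⟨m * (√(4 * π * k * t₁))⁻¹ * (1 + 2 / a) * exp (a / 2), a / 4, by linarith,
    fun t ht y h hh => ?_⟩
  calc |P (y + h) t * heatKernel k (y + h) t|
      = |P (y + h) t| * heatKernel k (y + h) t := by
        rw [abs_mul, abs_of_nonneg (heatKernel_nonneg _ _ _)]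
    _ ≤ m * (1 + (y + h) ^ 2) * ((√(4 * π * k * t₁))⁻¹ * exp (-a * (y + h) ^ 2)) :=
        mul_le_mul (hP t ht _) (heatKernel_le_of_mem_Icc hk ht₁ ht (y + h))
          (heatKernel_nonneg _ _ _) (by positivity)
    _ = m * (√(4 * π * k * t₁))⁻¹ * ((1 + (y + h) ^ 2) * exp (-a * (y + h) ^ 2)) := by ring
    _ ≤ m * (√(4 * π * k * t₁))⁻¹ * ((1 + 2 / a) * exp (-(a / 2) * (y + h) ^ 2)) :=
        mul_le_mul_of_nonneg_left (one_add_sq_mul_exp_neg_mul_sq_le ha _) hc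
    _ ≤ m * (√(4 * π * k * t₁))⁻¹ *
          ((1 + 2 / a) * (exp (a / 2) * exp (-(a / 2 / 2) * y ^ 2))) := by
        gcongr; exact exp_neg_mul_add_sq_le (by linarith) hh y
    _ = _ := by ring_nf

lemma abs_div_le_of_le {a₁ a : ℝ} (ha₁ : 0 < a₁) (ha : a₁ ≤ a) (y : ℝ) :
    |y / a| ≤ 1 / a₁ * (1 + y ^ 2) := by
  have hy : |y| ≤ 1 + y ^ 2 := by nlinarith [sq_abs y, sq_nonneg (|y| - 1)]
  rw [abs_div, abs_of_pos (ha₁.trans_le ha), div_le_iff₀ (ha₁.trans_le ha)]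
  calc |y| ≤ 1 + y ^ 2 := hy
    _ = 1 / a₁ * (1 + y ^ 2) * a₁ := by field_simp
    _ ≤ 1 / a₁ * (1 + y ^ 2) * a := by gcongr

lemma abs_div_sq_sub_one_div_le {a₁ a : ℝ} (ha₁ : 0 < a₁) (ha : a₁ ≤ a) (y : ℝ) :
    |(y / a) ^ 2 - 1 / a| ≤ (1 / a₁ ^ 2 + 1 / a₁) * (1 + y ^ 2) := by
  have ha0 : 0 < a := ha₁.trans_le ha
  have h1 : (y / a) ^ 2 ≤ 1 / a₁ ^ 2 * y ^ 2 := by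
    rw [div_pow, div_eq_mul_one_div (y ^ 2), mul_comm]; gcongr
  have h2 : 1 / a ≤ 1 / a₁ := by gcongr
  have h3 : 0 ≤ 1 / a := by positivity
  rw [abs_le]; constructor <;> nlinarith [sq_nonneg (y / a), sq_nonneg y,
    (by positivity : (0 : ℝ) ≤ 1 / a₁ ^ 2)]

lemma hasDerivAt_integral_mul_of_le {F F' : ℝ → ℝ → ℝ} {g b : ℝ → ℝ} {x₀ ε C : ℝ} (hε : 0 < ε)
    (hF_meas : ∀ x, AEStronglyMeasurable (F x)) (hF_int : Integrable (F x₀))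
    (hF'_meas : AEStronglyMeasurable (F' x₀)) (hb : Integrable b)
    (h_bound : ∀ x ∈ ball x₀ ε, ∀ ξ, |F' x ξ| ≤ b ξ)
    (h_diff : ∀ x ∈ ball x₀ ε, ∀ ξ, HasDerivAt (F · ξ) (F' x ξ) x)
    (hg : AEStronglyMeasurable g) (hgC : ∀ ξ, |g ξ| ≤ C) :
    HasDerivAt (fun x => ∫ ξ, F x ξ * g ξ) (∫ ξ, F' x₀ ξ * g ξ) x₀ := by
  refine (hasDerivAt_integral_of_dominated_loc_of_deriv_le (bound := fun ξ => b ξ * C)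
    (ball_mem_nhds x₀ hε) (.of_forall fun x => (hF_meas x).mul hg)
    (hF_int.mul_bdd hg (.of_forall hgC)) (hF'_meas.mul hg) (.of_forall fun ξ x hx => ?_)
    (hb.mul_const C) (.of_forall fun ξ x hx => (h_diff x hx ξ).mul_const (g ξ))).2
  rw [norm_mul]
  exact mul_le_mul (h_bound x hx ξ) (hgC ξ) (norm_nonneg _)
    ((abs_nonneg _).trans (h_bound x hx ξ))

lemma integrable_of_abs_le_exp_neg_mul_sq {f : ℝ → ℝ} {C c : ℝ} (hc : 0 < c)
    (hf : AEStronglyMeasurable f) (hfC : ∀ y, |f y| ≤ C * exp (-c * y ^ 2)) :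
    Integrable f :=
  ((integrable_exp_neg_mul_sq hc).const_mul C).mono' hf (.of_forall hfC)

lemma hasDerivAt_integral_sub_mul {f f' g : ℝ → ℝ} {C C' c : ℝ} (hf : ∀ y, HasDerivAt f (f' y) y)
    (hf_int : Integrable f) (hc : 0 < c)
    (hf'_bound : ∀ y h, |h| ≤ 1 → |f' (y + h)| ≤ C' * exp (-c * y ^ 2))
    (hg : AEStronglyMeasurable g) (hgC : ∀ ξ, |g ξ| ≤ C) (x₀ : ℝ) :
    HasDerivAt (fun x => ∫ ξ, f (x - ξ) * g ξ) (∫ ξ, f' (x₀ - ξ) * g ξ) x₀ := by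
  have hf_cont : Continuous f := continuous_iff_continuousAt.2 fun y => (hf y).continuousAt
  have hf'_meas : Measurable f' := by
    rw [← funext fun y => (hf y).deriv]; exact measurable_deriv f
  refine hasDerivAt_integral_mul_of_le (b := fun ξ => C' * exp (-c * (x₀ - ξ) ^ 2)) one_pos
    (fun x => (hf_cont.comp (continuous_sub_left x)).aestronglyMeasurable)
    (hf_int.comp_sub_left x₀)
    (hf'_meas.comp (measurable_const.sub measurable_id)).aestronglyMeasurable
    (((integrable_exp_neg_mul_sq hc).comp_sub_left x₀).const_mul C') (fun x hx ξ => ?_)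
    (fun x _ ξ => (hf (x - ξ)).comp_sub_const x ξ) hg hgC
  simpa using hf'_bound (x₀ - ξ) (x - x₀) (mem_ball_iff_norm.1 hx).le

section HeatKernelIntegrals

variable {k t : ℝ}

lemma exists_abs_heatKernel_x_le (hk : 0 < k) (ht : 0 < t) :
    ∃ C c, 0 < c ∧ ∀ y h, |h| ≤ 1 →
      |-((y + h) / (2 * k * t)) * heatKernel k (y + h) t| ≤ C * exp (-c * y ^ 2) := by
  obtain ⟨C, c, hc, hbound⟩ := exists_abs_mul_heatKernel_le hk ht le_rfl
    (P := fun y s => -(y / (2 * k * s))) fun s hs y => by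
      rw [abs_neg]; exact abs_div_le_of_le (a₁ := 2 * k * t) (by positivity) (by gcongr) y
  exact ⟨C, c, hc, hbound t ⟨le_rfl, le_rfl⟩⟩

lemma exists_abs_heatKernel_xx_le {t₁ t₂ : ℝ} (hk : 0 < k) (ht₁ : 0 < t₁) (h₁₂ : t₁ ≤ t₂) :
    ∃ C c, 0 < c ∧ ∀ t ∈ Icc t₁ t₂, ∀ y h, |h| ≤ 1 →
      |(((y + h) / (2 * k * t)) ^ 2 - 1 / (2 * k * t)) * heatKernel k (y + h) t|
        ≤ C * exp (-c * y ^ 2) :=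
  exists_abs_mul_heatKernel_le hk ht₁ h₁₂
    (P := fun y s => (y / (2 * k * s)) ^ 2 - 1 / (2 * k * s)) fun s hs y =>
      abs_div_sq_sub_one_div_le (a₁ := 2 * k * t₁) (by positivity) (by gcongr; exact hs.1) y

variable {g : ℝ → ℝ} {C : ℝ}

lemma hasDerivAt_integral_heatKernel_mul_x (hk : 0 < k) (ht : 0 < t)
    (hg : AEStronglyMeasurable g) (hgC : ∀ ξ, |g ξ| ≤ C) (x₀ : ℝ) :
    HasDerivAt (fun x => ∫ ξ, heatKernel k (x - ξ) t * g ξ)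
      (∫ ξ, -((x₀ - ξ) / (2 * k * t)) * heatKernel k (x₀ - ξ) t * g ξ) x₀ := by
  obtain ⟨C', c, hc, hbound⟩ := exists_abs_heatKernel_x_le hk ht
  exact hasDerivAt_integral_sub_mul (hasDerivAt_heatKernel_x k t) (integrable_heatKernel hk ht) hc
    hbound hg hgC x₀

lemma hasDerivAt_integral_heatKernel_mul_xx (hk : 0 < k) (ht : 0 < t)
    (hg : AEStronglyMeasurable g) (hgC : ∀ ξ, |g ξ| ≤ C) (x₀ : ℝ) :
    HasDerivAt (fun x => ∫ ξ, -((x - ξ) / (2 * k * t)) * heatKernel k (x - ξ) t * g ξ)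
      (∫ ξ, (((x₀ - ξ) / (2 * k * t)) ^ 2 - 1 / (2 * k * t)) * heatKernel k (x₀ - ξ) t * g ξ)
      x₀ := by
  obtain ⟨C₁, c₁, hc₁, hbound₁⟩ := exists_abs_heatKernel_x_le hk ht
  obtain ⟨C₂, c₂, hc₂, hbound₂⟩ := exists_abs_heatKernel_xx_le hk ht le_rfl
  have hint : Integrable fun y => -(y / (2 * k * t)) * heatKernel k y t :=
    integrable_of_abs_le_exp_neg_mul_sq hc₁
      (by have := continuous_heatKernel k t; fun_prop) (by simpa using (hbound₁ · 0))
  exact hasDerivAt_integral_sub_mul (hasDerivAt_heatKernel_xx k t) hint hc₂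
    (hbound₂ t ⟨le_rfl, le_rfl⟩) hg hgC x₀

lemma hasDerivAt_integral_heatKernel_mul_t {t₀ : ℝ} (hk : 0 < k) (ht₀ : 0 < t₀)
    (hg : AEStronglyMeasurable g) (hgC : ∀ ξ, |g ξ| ≤ C) (x : ℝ) :
    HasDerivAt (fun t => ∫ ξ, heatKernel k (x - ξ) t * g ξ)
      (k * ∫ ξ, (((x - ξ) / (2 * k * t₀)) ^ 2 - 1 / (2 * k * t₀)) * heatKernel k (x - ξ) t₀ * g ξ)
      t₀ := by
  obtain ⟨C', c, hc, hbound⟩ :=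
    exists_abs_heatKernel_xx_le (t₂ := 2 * t₀) hk (half_pos ht₀) (by linarith)
  have hball : ∀ s ∈ ball t₀ (t₀ / 2), s ∈ Icc (t₀ / 2) (2 * t₀) := fun s hs => by
    rw [mem_ball, Real.dist_eq, abs_lt] at hs
    constructor <;> linarith
  have hK := continuous_heatKernel k
  refine (hasDerivAt_integral_mul_of_le
    (F' := fun t ξ =>
      k * ((((x - ξ) / (2 * k * t)) ^ 2 - 1 / (2 * k * t)) * heatKernel k (x - ξ) t))
    (b := fun ξ => k * (C' * exp (-c * (x - ξ) ^ 2))) (half_pos ht₀)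
    (fun t => ((hK t).comp (continuous_sub_left x)).aestronglyMeasurable)
    ((integrable_heatKernel hk ht₀).comp_sub_left x)
    (by have := hK t₀; fun_prop)
    ((((integrable_exp_neg_mul_sq hc).comp_sub_left x).const_mul C').const_mul k)
    (fun s hs ξ => ?_) (fun s hs ξ => hasDerivAt_heatKernel_t hk ?_ (x - ξ)) hg hgC).congr_deriv ?_
  · rw [abs_mul, abs_of_pos hk]
    gcongr
    simpa using hbound s (hball s hs) (x - ξ) 0 (by simp)
  · linarith [(hball s hs).1]
  · rw [← integral_const_mul]
    congr 1 with ξ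
    ring

end HeatKernelIntegrals

/-- The heat extension `∫ K(x - ξ, t) g(ξ) dξ` written in the variable `ξ = x - √t z`, in which
it is also meaningful at `t = 0`, where it equals `g`. -/
noncomputable def heatExtension (k : ℝ) (g : ℝ → ℝ) (x t : ℝ) : ℝ :=
  ∫ z, heatKernel k z 1 * g (x - √t * z)

section HeatExtension

variable {k t C : ℝ} {g : ℝ → ℝ}

lemma heatExtension_eq_integral (ht : 0 < t) (x : ℝ) :
    heatExtension k g x t = ∫ ξ, heatKernel k (x - ξ) t * g ξ := by
  have hst : 0 < √t := sqrt_pos.2 ht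
  have hscale := Measure.integral_comp_mul_left (fun y => heatKernel k y t * g (x - y)) (√t)
  rw [abs_of_pos (inv_pos.2 hst), smul_eq_mul] at hscale
  rw [← integral_sub_left_eq_self _ volume x]
  simp_rw [sub_sub_cancel]
  rw [← mul_inv_cancel_left₀ hst.ne' (∫ y, heatKernel k y t * g (x - y)), ← hscale,
    ← integral_const_mul]
  simp_rw [← mul_assoc, sqrt_mul_heatKernel_sqrt_mul ht]
  rfl

lemma heatExtension_zero (hk : 0 < k) (x : ℝ) : heatExtension k g x 0 = g x := by
  simp [heatExtension, integral_mul_const, integral_heatKernel hk one_pos]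

lemma heatExtension_nonneg (hg : ∀ x, 0 ≤ g x) (x t : ℝ) : 0 ≤ heatExtension k g x t :=
  integral_nonneg fun _ => mul_nonneg (heatKernel_nonneg _ _ _) (hg _)

lemma abs_heatExtension_le (hk : 0 < k) (hgC : ∀ x, |g x| ≤ C) (x t : ℝ) :
    |heatExtension k g x t| ≤ C := by
  calc |heatExtension k g x t| = ‖∫ z, heatKernel k z 1 * g (x - √t * z)‖ := rfl
    _ ≤ ∫ z, heatKernel k z 1 * C :=
        norm_integral_le_of_norm_le ((integrable_heatKernel hk one_pos).mul_const C)
          (.of_forall fun z => by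
            rw [norm_mul, Real.norm_of_nonneg (heatKernel_nonneg _ _ _)]
            exact mul_le_mul_of_nonneg_left (hgC _) (heatKernel_nonneg _ _ _))
    _ = C := by rw [integral_mul_const, integral_heatKernel hk one_pos, one_mul]

lemma continuous_heatExtension (hk : 0 < k) (hg : Continuous g) (hgC : ∀ x, |g x| ≤ C) :
    Continuous fun p : ℝ × ℝ => heatExtension k g p.1 p.2 := by
  have hK := continuous_heatKernel k 1
  refine continuous_of_dominated (bound := fun z => heatKernel k z 1 * C)
    (fun p => by fun_prop) (fun p => .of_forall fun z => ?_)
    ((integrable_heatKernel hk one_pos).mul_const C) (.of_forall fun _ => by fun_prop)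
  rw [norm_mul, Real.norm_of_nonneg (heatKernel_nonneg _ _ _)]
  exact mul_le_mul_of_nonneg_left (hgC _) (heatKernel_nonneg _ _ _)

lemma exists_hasHeatDerivs_heatExtension (hk : 0 < k) (hg : AEStronglyMeasurable g)
    (hgC : ∀ x, |g x| ≤ C) :
    ∃ Rx Rxx, HasHeatDerivs (Ioi 0) (heatExtension k g) Rx Rxx fun x t => k * Rxx x t := by
  refine ⟨fun x t => ∫ ξ, -((x - ξ) / (2 * k * t)) * heatKernel k (x - ξ) t * g ξ,
    fun x t => ∫ ξ, (((x - ξ) / (2 * k * t)) ^ 2 - 1 / (2 * k * t)) * heatKernel k (x - ξ) t * g ξ,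
    fun x t (ht : 0 < t) => ⟨?_, hasDerivAt_integral_heatKernel_mul_xx hk ht hg hgC x, ?_⟩⟩
  · rw [funext (heatExtension_eq_integral (k := k) (g := g) ht)]
    exact hasDerivAt_integral_heatKernel_mul_x hk ht hg hgC x
  · exact (hasDerivAt_integral_heatKernel_mul_t hk ht hg hgC x).congr_of_eventuallyEq
      (eventually_of_mem (Ioi_mem_nhds ht) fun s hs => heatExtension_eq_integral hs x)

end HeatExtension

section Comparison

variable {k T D C : ℝ} {g : ℝ → ℝ} {q v vx vxx vt : ℝ → ℝ → ℝ}

lemma le_exp_mul_heatExtension (hk : 0 < k) (hg : Continuous g) (hgC : ∀ x, |g x| ≤ C)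
    (hg_nonneg : ∀ x, 0 ≤ g x) (hq : ∀ x, ∀ t ∈ Ioo 0 T, q x t ≤ D)
    (hv : HasHeatDerivs (Ioo 0 T) v vx vxx vt) (hv_cont : Continuous fun p : ℝ × ℝ => v p.1 p.2)
    (hv_bdd : ∃ C, ∀ x, ∀ t ∈ Ico 0 T, v x t ≤ C)
    (hv_sub : ∀ x, ∀ t ∈ Ioo 0 T, vt x t ≤ k * vxx x t + q x t * v x t)
    (hinit : ∀ x, v x 0 ≤ g x) :
    ∀ x, ∀ t ∈ Ico 0 T, v x t ≤ exp (D * t) * heatExtension k g x t := by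
  obtain ⟨Rx, Rxx, hR⟩ := exists_hasHeatDerivs_heatExtension hk hg.aestronglyMeasurable hgC
  have hR_cont := continuous_heatExtension hk hg hgC
  have hR_nonneg := heatExtension_nonneg (k := k) hg_nonneg
  refine hv.le_of_subsolution_of_supersolution hk.le ((hR.mono Ioo_subset_Ioi_self).exp_mul D)
    hv_cont (by fun_prop) hv_bdd ⟨0, fun x t _ => mul_nonneg (exp_pos _).le (hR_nonneg x t)⟩ hq
    hv_sub (fun x t ht => ?_) (fun x => by simpa [heatExtension_zero hk] using hinit x)
  nlinarith [mul_le_mul_of_nonneg_right (hq x t ht)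
    (mul_nonneg (exp_pos (D * t)).le (hR_nonneg x t))]

lemma exp_mul_heatExtension_le (hk : 0 < k) (hg : Continuous g) (hgC : ∀ x, |g x| ≤ C)
    (hg_nonneg : ∀ x, 0 ≤ g x) {M : ℝ} (hq : ∀ x, ∀ t ∈ Ioo 0 T, D ≤ q x t ∧ q x t ≤ M)
    (hv : HasHeatDerivs (Ioo 0 T) v vx vxx vt) (hv_cont : Continuous fun p : ℝ × ℝ => v p.1 p.2)
    (hv_bdd : ∃ C, ∀ x, ∀ t ∈ Ico 0 T, C ≤ v x t)
    (hv_super : ∀ x, ∀ t ∈ Ioo 0 T, k * vxx x t + q x t * v x t ≤ vt x t)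
    (hinit : ∀ x, g x ≤ v x 0) :
    ∀ x, ∀ t ∈ Ico 0 T, exp (D * t) * heatExtension k g x t ≤ v x t := by
  obtain ⟨Rx, Rxx, hR⟩ := exists_hasHeatDerivs_heatExtension hk hg.aestronglyMeasurable hgC
  have hR_cont := continuous_heatExtension hk hg hgC
  have hR_nonneg := heatExtension_nonneg (k := k) hg_nonneg
  have hR_bdd : ∀ x, ∀ t ∈ Ico 0 T, exp (D * t) * heatExtension k g x t ≤ exp (|D| * T) * C :=
    fun x t ht => mul_le_mul (exp_le_exp.2 (by nlinarith [le_abs_self D, abs_nonneg D, ht.1, ht.2]))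
      ((le_abs_self _).trans (abs_heatExtension_le hk hgC x t)) (hR_nonneg x t) (exp_pos _).le
  refine ((hR.mono Ioo_subset_Ioi_self).exp_mul D).le_of_subsolution_of_supersolution hk.le hv
    (by fun_prop) hv_cont ⟨_, hR_bdd⟩ hv_bdd (fun x t ht => (hq x t ht).2) (fun x t ht => ?_)
    hv_super (fun x => by simpa [heatExtension_zero hk] using hinit x)
  nlinarith [mul_le_mul_of_nonneg_right (hq x t ht).1
    (mul_nonneg (exp_pos (D * t)).le (hR_nonneg x t))]

end Comparison

theorem comparison_heat_zeroth_order_general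
    (k T A B : ℝ) (hk : 0 < k)
    (q : ℝ → ℝ → ℝ)
    (hq : ∀ x : ℝ, ∀ t ∈ Ioo (0 : ℝ) T, A ≤ q x t ∧ q x t ≤ B)
    (g : ℝ → ℝ) (hgcont : Continuous g) (hgbdd : ∃ C, ∀ x, |g x| ≤ C)
    (hgpos : ∀ x, 0 ≤ g x)
    (u ux uxx ut : ℝ → ℝ → ℝ)
    (hucont : Continuous fun p : ℝ × ℝ => u p.1 p.2)
    (hubdd : ∃ C, ∀ x : ℝ, ∀ t ∈ Icc (0 : ℝ) T, |u x t| ≤ C)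
    (hux : ∀ x : ℝ, ∀ t ∈ Ioo (0 : ℝ) T, HasDerivAt (fun y => u y t) (ux x t) x)
    (huxx : ∀ x : ℝ, ∀ t ∈ Ioo (0 : ℝ) T, HasDerivAt (fun y => ux y t) (uxx x t) x)
    (hut : ∀ x : ℝ, ∀ t ∈ Ioo (0 : ℝ) T, HasDerivAt (fun s => u x s) (ut x t) t)
    (hPDE : ∀ x : ℝ, ∀ t ∈ Ioo (0 : ℝ) T, ut x t = k * uxx x t + q x t * u x t)
    (hInit : ∀ x : ℝ, u x 0 = g x) :
    ∀ x : ℝ, ∀ t ∈ Ioo (0 : ℝ) T,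
      Real.exp (A * t) * (∫ ξ : ℝ, heatKernel k (x - ξ) t * g ξ) ≤ u x t ∧
      u x t ≤ Real.exp (B * t) * (∫ ξ : ℝ, heatKernel k (x - ξ) t * g ξ) ∧
      0 ≤ u x t := by
  intro x t ht
  obtain ⟨C, hgC⟩ := hgbdd
  obtain ⟨Cu, huC⟩ := hubdd
  have hu : HasHeatDerivs (Ioo 0 T) u ux uxx ut := fun x t ht =>
    ⟨hux x t ht, huxx x t ht, hut x t ht⟩
  have hu_bdd : ∀ x, ∀ t ∈ Ico 0 T, |u x t| ≤ Cu := fun x t ht => huC x t (Ico_subset_Icc_self ht)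
  have hupper := le_exp_mul_heatExtension hk hgcont hgC hgpos (fun x t ht => (hq x t ht).2) hu
    hucont ⟨Cu, fun x t ht => (abs_le.1 (hu_bdd x t ht)).2⟩ (fun x t ht => (hPDE x t ht).le)
    (fun x => (hInit x).le) x t (Ioo_subset_Ico_self ht)
  have hlower := exp_mul_heatExtension_le hk hgcont hgC hgpos hq hu hucont
    ⟨-Cu, fun x t ht => (abs_le.1 (hu_bdd x t ht)).1⟩ (fun x t ht => (hPDE x t ht).ge)
    (fun x => (hInit x).ge) x t (Ioo_subset_Ico_self ht)
  rw [← heatExtension_eq_integral ht.1]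
  exact ⟨hlower, hupper, (mul_nonneg (exp_pos _).le (heatExtension_nonneg hgpos x t)).trans hlower⟩

/-- Two-sided comparison for the heat equation with a bounded zeroth-order
coefficient: if `u_t = k u_{xx} + q u` with `A ≤ q ≤ B` and nonnegative initial datum `g`,
then `e^{At} R(x,t) ≤ u(x,t) ≤ e^{Bt} R(x,t)` where `R` is the heat extension of `g`;
in particular `u ≥ 0`. -/
theorem comparison_heat_zeroth_order
    (k T A B : ℝ) (hk : 0 < k) (hT : 0 < T)
    (q : ℝ → ℝ → ℝ) (hqmeas : Measurable (Function.uncurry q))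
    (hq : ∀ x : ℝ, ∀ t ∈ Ioo (0 : ℝ) T, A ≤ q x t ∧ q x t ≤ B)
    (g : ℝ → ℝ) (hgcont : Continuous g) (hgbdd : ∃ C, ∀ x, |g x| ≤ C)
    (hgpos : ∀ x, 0 ≤ g x)
    (u ux uxx ut : ℝ → ℝ → ℝ)
    (hucont : Continuous fun p : ℝ × ℝ => u p.1 p.2)
    (hubdd : ∃ C, ∀ x : ℝ, ∀ t ∈ Icc (0 : ℝ) T, |u x t| ≤ C)
    (hux : ∀ x : ℝ, ∀ t ∈ Ioo (0 : ℝ) T, HasDerivAt (fun y => u y t) (ux x t) x)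
    (huxx : ∀ x : ℝ, ∀ t ∈ Ioo (0 : ℝ) T, HasDerivAt (fun y => ux y t) (uxx x t) x)
    (hut : ∀ x : ℝ, ∀ t ∈ Ioo (0 : ℝ) T, HasDerivAt (fun s => u x s) (ut x t) t)
    (huxxcont : ContinuousOn (fun p : ℝ × ℝ => uxx p.1 p.2) (univ ×ˢ Ioo (0 : ℝ) T))
    (hutcont : ContinuousOn (fun p : ℝ × ℝ => ut p.1 p.2) (univ ×ˢ Ioo (0 : ℝ) T))
    (hPDE : ∀ x : ℝ, ∀ t ∈ Ioo (0 : ℝ) T, ut x t = k * uxx x t + q x t * u x t)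
    (hInit : ∀ x : ℝ, u x 0 = g x) :
    ∀ x : ℝ, ∀ t ∈ Ioo (0 : ℝ) T,
      Real.exp (A * t) * (∫ ξ : ℝ, heatKernel k (x - ξ) t * g ξ) ≤ u x t ∧
      u x t ≤ Real.exp (B * t) * (∫ ξ : ℝ, heatKernel k (x - ξ) t * g ξ) ∧
      0 ≤ u x t :=
  comparison_heat_zeroth_order_general k T A B hk q hq g hgcont hgbdd hgpos u ux uxx ut hucont hubdd
    hux huxx hut hPDE hInit
end

section
/- Let w > 0 and let f : (0,∞) → [0,∞) be measurable with f(t) ≤ C (1+t)^{−w} for all t > 0 and some constant C > 0. Then there exists a constant C' > 0 such that for all t ≥ 2 the ½-fractional integral (I_{1/2} f)(t) = ∫_0^t f(s) / √(t−s) ds satisfies (I_{1/2} f)(t) ≤ C' ( t^{−1/2} + (log t) · t^{−w + 1/2} ). -/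
/-!
Split `∫₀ᵗ (1+s)^(-w) (t-s)^(-1/2) ds` at `t/2`. On `[0, t/2]` the kernel is at most
`(t/2)^(-1/2)`, while `∫₀^{t/2} (1+s)^(-w)` is bounded when `w > 1` and at most `t^(1-w) log t`
when `w ≤ 1` (compare with `t^(1-w)/(1+s)`). On `[t/2, t]` the weight is at most `(t/2)^(-w)` and
the kernel integrates to `2 √(t/2)`.
-/

open MeasureTheory Set Real intervalIntegral

lemma continuousOn_one_add_rpow (r : ℝ) {a b : ℝ} (ha : 0 ≤ a) (hb : 0 ≤ b) :
    ContinuousOn (fun s : ℝ => (1 + s) ^ r) (uIcc a b) :=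
  (continuousOn_const.add continuousOn_id).rpow_const fun s hs =>
    Or.inl (show 1 + s ≠ 0 by linarith [le_min ha hb, hs.1])

lemma integral_one_add_rpow_neg_le_of_one_lt {w T : ℝ} (hw : 1 < w) (hT : 0 ≤ T) :
    ∫ s in (0 : ℝ)..T, (1 + s) ^ (-w) ≤ 1 / (w - 1) := by
  rw [integral_comp_add_left (fun x => x ^ (-w)), add_zero,
    integral_rpow (Or.inr ⟨by linarith, notMem_uIcc_of_lt one_pos (by linarith)⟩), one_rpow,
    ← neg_div_neg_eq]
  ring_nf
  have : 0 ≤ (1 + T) ^ (1 - w) * (-1 + w)⁻¹ :=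
    mul_nonneg (rpow_nonneg (by linarith) _) (inv_nonneg.2 (by linarith))
  linarith

lemma integral_one_add_rpow_neg_le_of_le_one {w T : ℝ} (hw : w ≤ 1) (hT : 0 ≤ T) :
    ∫ s in (0 : ℝ)..T, (1 + s) ^ (-w) ≤ (1 + T) ^ (1 - w) * log (1 + T) := by
  calc ∫ s in (0 : ℝ)..T, (1 + s) ^ (-w)
      ≤ ∫ s in (0 : ℝ)..T, (1 + T) ^ (1 - w) * (1 + s) ^ (-1 : ℝ) := by
        refine integral_mono_on hT (continuousOn_one_add_rpow _ le_rfl hT).intervalIntegrable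
          ((continuousOn_one_add_rpow _ le_rfl hT).intervalIntegrable.const_mul _) fun s hs => ?_
        have hs0 : 0 < 1 + s := by linarith [hs.1]
        rw [show -w = (1 - w) + -1 by ring, rpow_add hs0]
        gcongr
        linarith [hs.2]
    _ = (1 + T) ^ (1 - w) * log (1 + T) := by
        rw [intervalIntegral.integral_const_mul, integral_comp_add_left (fun x => x ^ (-1 : ℝ)),
          add_zero]
        simp only [rpow_neg_one]
        rw [integral_inv (notMem_uIcc_of_lt one_pos (by linarith)), div_one]

lemma integral_sub_rpow_neg_half (a t : ℝ) :
    ∫ s in a..t, (t - s) ^ (-(1 / 2) : ℝ) = 2 * (t - a) ^ (1 / 2 : ℝ) := by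
  rw [integral_comp_sub_left (fun x => x ^ (-(1 / 2) : ℝ)), sub_self,
    integral_rpow (Or.inl (by norm_num)), zero_rpow (by norm_num)]
  norm_num
  ring

lemma intervalIntegrable_sub_rpow_neg_half (t a b : ℝ) :
    IntervalIntegrable (fun s => (t - s) ^ (-(1 / 2) : ℝ)) volume a b := by
  simpa using (intervalIntegrable_rpow' (by norm_num : (-1 : ℝ) < -(1 / 2))
    (a := t - a) (b := t - b)).comp_sub_left t

lemma intervalIntegrable_one_add_rpow_mul_sub_rpow (w t : ℝ) {a b : ℝ} (ha : 0 ≤ a)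
    (hb : 0 ≤ b) :
    IntervalIntegrable (fun s => (1 + s) ^ (-w) * (t - s) ^ (-(1 / 2) : ℝ)) volume a b :=
  (intervalIntegrable_sub_rpow_neg_half t a b).continuousOn_mul (continuousOn_one_add_rpow _ ha hb)

lemma exists_integral_one_add_rpow_neg_le (w : ℝ) :
    ∃ B > 0, ∀ t ≥ 2,
      ∫ s in (0 : ℝ)..t / 2, (1 + s) ^ (-w) ≤ B * (1 + log t * t ^ (1 - w)) := by
  rcases le_or_gt w 1 with hw | hw
  · refine ⟨1, one_pos, fun t ht => ?_⟩
    have hlog : 0 ≤ log t := log_nonneg (by linarith)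
    calc ∫ s in (0 : ℝ)..t / 2, (1 + s) ^ (-w)
        ≤ (1 + t / 2) ^ (1 - w) * log (1 + t / 2) :=
          integral_one_add_rpow_neg_le_of_le_one hw (by linarith)
      _ ≤ t ^ (1 - w) * log t := by
          have := log_nonneg (by linarith : (1 : ℝ) ≤ 1 + t / 2)
          gcongr <;> linarith
      _ ≤ 1 * (1 + log t * t ^ (1 - w)) := by linarith
  · refine ⟨1 / (w - 1), by simpa using hw, fun t ht => ?_⟩
    have : 0 ≤ log t * t ^ (1 - w) := by
      have := log_nonneg (by linarith : (1 : ℝ) ≤ t); positivity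
    calc ∫ s in (0 : ℝ)..t / 2, (1 + s) ^ (-w)
        ≤ 1 / (w - 1) := integral_one_add_rpow_neg_le_of_one_lt hw (by linarith)
      _ ≤ 1 / (w - 1) * (1 + log t * t ^ (1 - w)) :=
          le_mul_of_one_le_right (by simpa using hw.le) (by linarith)

lemma integral_one_add_rpow_mul_sub_rpow_le_left (w : ℝ) {t : ℝ} (ht : 0 < t) :
    ∫ s in (0 : ℝ)..t / 2, (1 + s) ^ (-w) * (t - s) ^ (-(1 / 2) : ℝ) ≤
      (t / 2) ^ (-(1 / 2) : ℝ) * ∫ s in (0 : ℝ)..t / 2, (1 + s) ^ (-w) := by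
  rw [← intervalIntegral.integral_const_mul]
  refine integral_mono_on (by linarith)
    (intervalIntegrable_one_add_rpow_mul_sub_rpow w t le_rfl (by linarith))
    ((continuousOn_one_add_rpow _ le_rfl (by linarith)).intervalIntegrable.const_mul _)
    fun s hs => ?_
  rw [mul_comm]
  exact mul_le_mul_of_nonneg_right
    (rpow_le_rpow_of_nonpos (by linarith) (by linarith [hs.2]) (by norm_num))
    (rpow_nonneg (by linarith [hs.1]) _)

lemma integral_one_add_rpow_mul_sub_rpow_le_right {w : ℝ} (hw : 0 ≤ w) {t : ℝ} (ht : 0 < t) :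
    ∫ s in t / 2..t, (1 + s) ^ (-w) * (t - s) ^ (-(1 / 2) : ℝ) ≤
      2 * (t / 2) ^ (-w + 1 / 2) := by
  calc ∫ s in t / 2..t, (1 + s) ^ (-w) * (t - s) ^ (-(1 / 2) : ℝ)
      ≤ ∫ s in t / 2..t, (t / 2) ^ (-w) * (t - s) ^ (-(1 / 2) : ℝ) := by
        refine integral_mono_on (by linarith)
          (intervalIntegrable_one_add_rpow_mul_sub_rpow w t (by linarith) ht.le)
          ((intervalIntegrable_sub_rpow_neg_half t _ _).const_mul _) fun s hs => ?_
        exact mul_le_mul_of_nonneg_right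
          (rpow_le_rpow_of_nonpos (by linarith) (by linarith [hs.1]) (by linarith))
          (rpow_nonneg (by linarith [hs.2]) _)
    _ = 2 * (t / 2) ^ (-w + 1 / 2) := by
        rw [intervalIntegral.integral_const_mul, integral_sub_rpow_neg_half,
          show t - t / 2 = t / 2 by ring, rpow_add (by linarith)]
        ring

lemma div_two_rpow {t : ℝ} (ht : 0 ≤ t) (a : ℝ) : (t / 2) ^ a = 2 ^ (-a) * t ^ a := by
  rw [div_eq_mul_inv, mul_rpow ht (by norm_num), inv_rpow (by norm_num), rpow_neg (by norm_num),
    mul_comm]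

lemma exists_integral_one_add_rpow_mul_sub_rpow_le {w : ℝ} (hw : 0 ≤ w) :
    ∃ K > 0, ∀ t ≥ 2, ∫ s in (0 : ℝ)..t, (1 + s) ^ (-w) * (t - s) ^ (-(1 / 2) : ℝ) ≤
      K * (t ^ (-(1 / 2) : ℝ) + log t * t ^ (-w + 1 / 2)) := by
  obtain ⟨B, hB, hBt⟩ := exists_integral_one_add_rpow_neg_le w
  have hlog2 : 0 < log 2 := log_pos one_lt_two
  refine ⟨2 ^ (1 / 2 : ℝ) * B + 2 * 2 ^ (w - 1 / 2) / log 2, by positivity, fun t ht => ?_⟩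
  have ht0 : 0 < t := by linarith
  have hXY : t ^ (-(1 / 2) : ℝ) * t ^ (1 - w) = t ^ (-w + 1 / 2) := by
    rw [← rpow_add ht0]; ring_nf
  set X := t ^ (-(1 / 2) : ℝ)
  set Y := t ^ (-w + 1 / 2)
  have hY : log 2 * Y ≤ log t * Y := by gcongr
  have hleft := integral_one_add_rpow_mul_sub_rpow_le_left w ht0
  have hright := integral_one_add_rpow_mul_sub_rpow_le_right hw ht0
  rw [div_two_rpow ht0.le, neg_neg] at hleft
  rw [div_two_rpow ht0.le, show -(-w + 1 / 2) = w - 1 / 2 by ring] at hright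
  rw [← integral_add_adjacent_intervals
    (intervalIntegrable_one_add_rpow_mul_sub_rpow w t le_rfl (by linarith : (0 : ℝ) ≤ t / 2))
    (intervalIntegrable_one_add_rpow_mul_sub_rpow w t (by linarith) ht0.le)]
  calc _ ≤ 2 ^ (1 / 2 : ℝ) * X * (B * (1 + log t * t ^ (1 - w))) + 2 * (2 ^ (w - 1 / 2) * Y) :=
        add_le_add (hleft.trans (by gcongr; exact hBt t ht)) hright
    _ = 2 ^ (1 / 2 : ℝ) * B * (X + log t * Y) + 2 * 2 ^ (w - 1 / 2) / log 2 * (log 2 * Y) := by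
        rw [← hXY]; field_simp
    _ ≤ _ := by
        have hX : 0 ≤ X := by positivity
        rw [add_mul]
        gcongr
        linarith

theorem half_fractional_integral_decay_general
    (w : ℝ) (hw : 0 < w)
    (f : ℝ → ℝ) (hfpos : ∀ t > (0 : ℝ), 0 ≤ f t)
    (C : ℝ) (hC : 0 < C) (hdecay : ∀ t > (0 : ℝ), f t ≤ C * (1 + t) ^ (-w)) :
    ∃ C' > 0, ∀ t : ℝ, 2 ≤ t →
      (∫ s in Ioo (0 : ℝ) t, f s / Real.sqrt (t - s)) ≤
        C' * (t ^ (-(1 : ℝ) / 2) + Real.log t * t ^ (-w + 1 / 2)) := by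
  obtain ⟨K, hK, hKt⟩ := exists_integral_one_add_rpow_mul_sub_rpow_le hw.le
  refine ⟨C * K, by positivity, fun t ht => ?_⟩
  have hint := (intervalIntegrable_one_add_rpow_mul_sub_rpow w t le_rfl (by linarith)).1
  calc ∫ s in Ioo (0 : ℝ) t, f s / √(t - s)
      ≤ ∫ s in Ioo (0 : ℝ) t, C * ((1 + s) ^ (-w) * (t - s) ^ (-(1 / 2) : ℝ)) := by
        refine integral_mono_of_nonneg ?_ ((hint.mono_set Ioo_subset_Ioc_self).const_mul C) ?_
        all_goals filter_upwards [ae_restrict_mem measurableSet_Ioo] with s ⟨hs0, hst⟩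
        · exact div_nonneg (hfpos s hs0) (sqrt_nonneg _)
        · rw [sqrt_eq_rpow, div_eq_mul_inv, ← rpow_neg (by linarith), ← mul_assoc]
          exact mul_le_mul_of_nonneg_right (hdecay s hs0) (rpow_nonneg (by linarith) _)
    _ = C * ∫ s in (0 : ℝ)..t, (1 + s) ^ (-w) * (t - s) ^ (-(1 / 2) : ℝ) := by
        rw [MeasureTheory.integral_const_mul, integral_of_le (by linarith),
          integral_Ioc_eq_integral_Ioo]
    _ ≤ C * (K * (t ^ (-(1 : ℝ) / 2) + log t * t ^ (-w + 1 / 2))) := by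
        rw [neg_div]; gcongr; exact hKt t ht
    _ = _ := by ring

/-- Decay estimate for the ½-fractional integral of a function decaying
like `(1+t)^{-w}`: for `t ≥ 2`,
`∫_0^t f(s)/√(t-s) ds ≤ C' (t^{-1/2} + (log t) t^{-w+1/2})`. -/
theorem half_fractional_integral_decay
    (w : ℝ) (hw : 0 < w)
    (f : ℝ → ℝ) (hfmeas : Measurable f) (hfpos : ∀ t > (0 : ℝ), 0 ≤ f t)
    (C : ℝ) (hC : 0 < C) (hdecay : ∀ t > (0 : ℝ), f t ≤ C * (1 + t) ^ (-w)) :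
    ∃ C' > 0, ∀ t : ℝ, 2 ≤ t →
      (∫ s in Ioo (0 : ℝ) t, f s / Real.sqrt (t - s)) ≤
        C' * (t ^ (-(1 : ℝ) / 2) + Real.log t * t ^ (-w + 1 / 2)) :=
  half_fractional_integral_decay_general w hw f hfpos C hC hdecay
end

section
/- Let k > 0 and let b_l, b_r : [0,∞) → ℝ be differentiable. Suppose F : ℝ × (0,∞) → ℝ possesses the partial derivatives F_t, F_x, F_{xx} and satisfies F_t = k F_{xx} + ḃ_l(t) F^+ − ḃ_r(t) F^− on ℝ × (0,∞), where F^+ = (F + |F|)/2 and F^− = (|F| − F)/2. Then the function U(x,t) := F(x,t) · exp( −(b_l(t) + b_r(t))/2 ) satisfies U_t = k U_{xx} + ½ ( ḃ_l(t) − ḃ_r(t) ) |U| on ℝ × (0,∞). -/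
/-!
Writing `F^± = (|F| ± F)/2`, the reaction term `ḃ_l F^+ - ḃ_r F^-` splits into the linear part
`½(ḃ_l + ḃ_r) F` and `½(ḃ_l - ḃ_r)|F|`. The weight `exp(-(b_l + b_r)/2)` is positive, so it
commutes with `|·|`, and its time derivative cancels exactly the linear part.
-/

lemma mul_posPart_sub_mul_negPart (a b f : ℝ) :
    a * ((f + |f|) / 2) - b * ((|f| - f) / 2) = (a + b) / 2 * f + (a - b) / 2 * |f| := by
  ring

lemma HasDerivAt.mul_exp {u c : ℝ → ℝ} {u' c' t : ℝ} (hu : HasDerivAt u u' t)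
    (hc : HasDerivAt c c' t) :
    HasDerivAt (fun s => u s * Real.exp (c s)) ((u' + c' * u t) * Real.exp (c t)) t :=
  (hu.mul hc.exp).congr_deriv (by ring)

theorem exponential_transformation_general
    (k : ℝ)
    (bl br bl' br' : ℝ → ℝ)
    (hbl : ∀ t : ℝ, HasDerivAt bl (bl' t) t)
    (hbr : ∀ t : ℝ, HasDerivAt br (br' t) t)
    (F Fx Fxx Ft : ℝ → ℝ → ℝ)
    (hFx : ∀ x : ℝ, ∀ t > (0 : ℝ), HasDerivAt (fun y => F y t) (Fx x t) x)
    (hFxx : ∀ x : ℝ, ∀ t > (0 : ℝ), HasDerivAt (fun y => Fx y t) (Fxx x t) x)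
    (hFt : ∀ x : ℝ, ∀ t > (0 : ℝ), HasDerivAt (fun s => F x s) (Ft x t) t)
    (hPDE : ∀ x : ℝ, ∀ t > (0 : ℝ),
      Ft x t = k * Fxx x t + bl' t * ((F x t + |F x t|) / 2)
        - br' t * ((|F x t| - F x t) / 2)) :
    ∀ x : ℝ, ∀ t > (0 : ℝ),
      -- spatial derivatives of U(·,t)
      HasDerivAt (fun y => F y t * Real.exp (-(bl t + br t) / 2))
        (Fx x t * Real.exp (-(bl t + br t) / 2)) x ∧
      HasDerivAt (fun y => Fx y t * Real.exp (-(bl t + br t) / 2))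
        (Fxx x t * Real.exp (-(bl t + br t) / 2)) x ∧
      -- time derivative of U(x,·) : U_t = k U_{xx} + ½(ḃ_l - ḃ_r)|U|
      HasDerivAt (fun s => F x s * Real.exp (-(bl s + br s) / 2))
        (k * (Fxx x t * Real.exp (-(bl t + br t) / 2))
          + (1 / 2) * (bl' t - br' t) * |F x t * Real.exp (-(bl t + br t) / 2)|) t := by
  intro x t ht
  refine ⟨(hFx x t ht).mul_const _, (hFxx x t ht).mul_const _, ?_⟩
  have hweight : HasDerivAt (fun s => -(bl s + br s) / 2) (-(bl' t + br' t) / 2) t :=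
    ((hbl t).add (hbr t)).neg.div_const 2
  refine ((hFt x t ht).mul_exp hweight).congr_deriv ?_
  rw [abs_mul, abs_of_pos (Real.exp_pos _), hPDE x t ht, add_sub_assoc,
    mul_posPart_sub_mul_negPart]
  ring

/-- The exponential change of unknown
`U(x,t) = F(x,t) exp(-(b_l(t)+b_r(t))/2)` transforms the equation
`F_t = k F_{xx} + ḃ_l F^+ - ḃ_r F^-` (with `F^+ = (F+|F|)/2`, `F^- = (|F|-F)/2`)
into the semilinear heat equation `U_t = k U_{xx} + ½(ḃ_l - ḃ_r)|U|`. -/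
theorem exponential_transformation
    (k : ℝ) (hk : 0 < k)
    (bl br bl' br' : ℝ → ℝ)
    (hbl : ∀ t : ℝ, HasDerivAt bl (bl' t) t)
    (hbr : ∀ t : ℝ, HasDerivAt br (br' t) t)
    (F Fx Fxx Ft : ℝ → ℝ → ℝ)
    (hFx : ∀ x : ℝ, ∀ t > (0 : ℝ), HasDerivAt (fun y => F y t) (Fx x t) x)
    (hFxx : ∀ x : ℝ, ∀ t > (0 : ℝ), HasDerivAt (fun y => Fx y t) (Fxx x t) x)
    (hFt : ∀ x : ℝ, ∀ t > (0 : ℝ), HasDerivAt (fun s => F x s) (Ft x t) t)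
    (hPDE : ∀ x : ℝ, ∀ t > (0 : ℝ),
      Ft x t = k * Fxx x t + bl' t * ((F x t + |F x t|) / 2)
        - br' t * ((|F x t| - F x t) / 2)) :
    ∀ x : ℝ, ∀ t > (0 : ℝ),
      -- spatial derivatives of U(·,t)
      HasDerivAt (fun y => F y t * Real.exp (-(bl t + br t) / 2))
        (Fx x t * Real.exp (-(bl t + br t) / 2)) x ∧
      HasDerivAt (fun y => Fx y t * Real.exp (-(bl t + br t) / 2))
        (Fxx x t * Real.exp (-(bl t + br t) / 2)) x ∧
      -- time derivative of U(x,·) : U_t = k U_{xx} + ½(ḃ_l - ḃ_r)|U|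
      HasDerivAt (fun s => F x s * Real.exp (-(bl s + br s) / 2))
        (k * (Fxx x t * Real.exp (-(bl t + br t) / 2))
          + (1 / 2) * (bl' t - br' t) * |F x t * Real.exp (-(bl t + br t) / 2)|) t :=
  exponential_transformation_general k bl br bl' br' hbl hbr F Fx Fxx Ft hFx hFxx hFt hPDE
end
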